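/- Kantorovich inequality for tubular tensors: if 𝒜 ∈ ℂ^{n×n×p} is Hermitian positive definite with extreme tubular eigenvalues [λ_m], [λ_M], and 𝒳 ∈ ℂ^{n×1×p} satisfies 𝒳^H*𝒳 = [e_1] (identity tubular tensor), then (𝒳^H*𝒜*𝒳)*(𝒳^H*𝒜^{-1}*𝒳) ⪯ (1/4)([λ_m]+[λ_M])^2 * [λ_m]^{-1} * [λ_M]^{-1}, where powers and products are T-products of tubular tensors and ⪯ is the Loewner-type order on Hermitian tubular tensors. -/

import Mathlib

open Matrix Complex Finset Kronecker
open scoped ComplexOrder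

/-- The `p × p` circulant matrix with first column `v`. -/
noncomputable def circ (p : ℕ) (v : Fin p → ℂ) : Matrix (Fin p) (Fin p) ℂ :=
  Matrix.of fun j k => v (j - k)

/-- The normalized (unitary) DFT matrix of order `p`, with `ω = exp(-2πi/p)`. -/
noncomputable def Fp (p : ℕ) : Matrix (Fin p) (Fin p) ℂ :=
  Matrix.of fun j k =>
    Complex.exp (-(2 * Real.pi * Complex.I * (j.val * k.val)) / p) / (Real.sqrt p : ℂ)

/-- Block circulant matrix of a third-order tensor given by its frontal slices. -/
noncomputable def bcirc {n m p : ℕ} (X : Fin p → Matrix (Fin n) (Fin m) ℂ) :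
    Matrix (Fin p × Fin n) (Fin p × Fin m) ℂ :=
  Matrix.of fun jr kc => X (jr.1 - kc.1) jr.2 kc.2

/-- Block circulant matrix of an `n × 1 × p` tensor (slices viewed as vectors). -/
noncomputable def bcircV {n p : ℕ} (X : Fin p → Fin n → ℂ) :
    Matrix (Fin p × Fin n) (Fin p) ℂ :=
  Matrix.of fun jr k => X (jr.1 - k) jr.2

/-- Block diagonal matrix (square-block index first). -/
noncomputable def blockDiagMat {n m p : ℕ} (D : Fin p → Matrix (Fin n) (Fin m) ℂ) :
    Matrix (Fin p × Fin n) (Fin p × Fin m) ℂ :=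
  Matrix.of fun jr kc => if jr.1 = kc.1 then D jr.1 jr.2 kc.2 else 0

/-- Block diagonal matrix whose blocks are column vectors. -/
noncomputable def blockDiagVec {n p : ℕ} (x : Fin p → Fin n → ℂ) :
    Matrix (Fin p × Fin n) (Fin p) ℂ :=
  Matrix.of fun jr k => if jr.1 = k then x k jr.2 else 0

/-- The T-product of two third-order tensors (slicewise cyclic convolution). -/
noncomputable def tmul {n m l p : ℕ} (A : Fin p → Matrix (Fin n) (Fin m) ℂ)
    (B : Fin p → Matrix (Fin m) (Fin l) ℂ) : Fin p → Matrix (Fin n) (Fin l) ℂ :=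
  fun i => ∑ j, A (i - j) * B j

/-- The identity tensor: first frontal slice is `I_n`, the others are zero. -/
noncomputable def tId (n p : ℕ) [NeZero p] : Fin p → Matrix (Fin n) (Fin n) ℂ :=
  fun i => if i = 0 then 1 else 0

/-- Conjugate T-transpose of a tensor. -/
noncomputable def tH {n m p : ℕ} (X : Fin p → Matrix (Fin n) (Fin m) ℂ) :
    Fin p → Matrix (Fin m) (Fin n) ℂ :=
  fun i => (X (-i))ᴴ

/-- The tubular tensor `𝒳ᴴ * 𝒴` for `n × 1 × p` tensors `𝒳, 𝒴`. -/
noncomputable def xHy {n p : ℕ} (X Y : Fin p → Fin n → ℂ) : Fin p → ℂ :=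
  fun i => ∑ j, star (X (j - i)) ⬝ᵥ Y j

/-- The tubular tensor `𝒳ᴴ * 𝒳` for an `n × 1 × p` tensor `𝒳`. -/
noncomputable def xHx {n p : ℕ} (X : Fin p → Fin n → ℂ) : Fin p → ℂ := xHy X X

/-- T-linear independence of a family of `n × 1 × p` tensors
(coefficients are tubular tensors acting via the T-product). -/
def TLinIndep {n p k : ℕ} (X : Fin k → Fin p → Fin n → ℂ) : Prop :=
  ∀ c : Fin k → Fin p → ℂ,
    (∀ i : Fin p, ∑ j, ∑ t, c j t • X j (i - t) = 0) → ∀ j, c j = 0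

/-- `[λ]` is a tubular eigenvalue of the `n × n × p` tensor `𝒜`:
`𝒜 * 𝒳 = 𝒳 * [λ]` for some eigentensor `𝒳` with `𝒳ᴴ * 𝒳` invertible. -/
def IsTubEig {n p : ℕ} (A : Fin p → Matrix (Fin n) (Fin n) ℂ) (lam : Fin p → ℂ) : Prop :=
  ∃ X : Fin p → Fin n → ℂ,
    (∀ i, ∑ t, (A (i - t)).mulVec (X t) = ∑ t, lam t • X (i - t)) ∧
    IsUnit (circ p (xHx X))


lemma sum_exp_eq (p : ℕ) [NeZero p] (d : ℤ) :
    ∑ t : Fin p, Complex.exp (2*Real.pi*Complex.I*t.val*d/p) =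
      if (p:ℤ) ∣ d then (p:ℂ) else 0 := by
  have hp : (p:ℂ) ≠ 0 := Nat.cast_ne_zero.mpr (NeZero.ne p)
  split_ifs with h
  · obtain ⟨c, rfl⟩ := h
    have key : ∀ t : Fin p, Complex.exp (2*Real.pi*Complex.I*t.val*(((p:ℤ)*c : ℤ))/p) = 1 := by
      intro t
      have harg : (2*(Real.pi:ℂ)*Complex.I*t.val*(((p:ℤ)*c : ℤ))/p)
          = ((t.val * c : ℤ)) * (2*Real.pi*Complex.I) := by
        field_simp
        push_cast
        ring
      rw [harg, Complex.exp_int_mul_two_pi_mul_I]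
    rw [Finset.sum_congr rfl (fun t _ => key t)]
    simp [Finset.card_univ]
  · have hz1 : Complex.exp (2*Real.pi*Complex.I*d/p) ≠ 1 := by
      intro hz
      rw [Complex.exp_eq_one_iff] at hz
      obtain ⟨m, hm⟩ := hz
      apply h
      refine ⟨m, ?_⟩
      have h2 : (2*(Real.pi:ℂ)*Complex.I) ≠ 0 := by
        simp [Real.pi_ne_zero, Complex.I_ne_zero]
      have hdm : (d : ℂ) = (p : ℂ) * m := by
        field_simp at hm
        have h3 : (2*(Real.pi:ℂ)*Complex.I) * (d:ℂ)
            = (2*(Real.pi:ℂ)*Complex.I) * ((p:ℂ)*m) := by linear_combination (2*(Real.pi:ℂ)*Complex.I) * hm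
        exact mul_left_cancel₀ h2 h3
      exact_mod_cast hdm
    have hzp : Complex.exp (2*Real.pi*Complex.I*d/p) ^ p = 1 := by
      rw [← Complex.exp_nat_mul]
      have harg : (p:ℂ) * (2*Real.pi*Complex.I*d/p) = (d:ℤ) * (2*Real.pi*Complex.I) := by
        field_simp
      rw [harg, Complex.exp_int_mul_two_pi_mul_I]
    have hterm : ∀ t : Fin p, Complex.exp (2*Real.pi*Complex.I*t.val*d/p)
        = Complex.exp (2*Real.pi*Complex.I*d/p) ^ (t.val) := by
      intro t
      rw [← Complex.exp_nat_mul]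
      congr 1
      ring
    rw [Finset.sum_congr rfl (fun t _ => hterm t), Fin.sum_univ_eq_sum_range]
    rw [geom_sum_eq hz1, hzp]
    simp



lemma not_dvd_sub {p : ℕ} (j k : Fin p) (hjk : j ≠ k) : ¬ ((p:ℤ) ∣ ((j.val : ℤ) - k.val)) := by
  intro hdvd
  have h1 : (j.val : ℤ) < p := by exact_mod_cast j.isLt
  have h2 : (k.val : ℤ) < p := by exact_mod_cast k.isLt
  have hne : (j.val : ℤ) - k.val ≠ 0 := by
    intro h0
    exact hjk (Fin.ext (by omega))
  rcases lt_or_gt_of_ne hne with hlt | hgt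
  · have := Int.le_of_dvd (by omega) (hdvd.neg_right)
    omega
  · have := Int.le_of_dvd hgt hdvd
    omega

lemma conj_Fp {p : ℕ} (j k : Fin p) :
    (starRingEnd ℂ) (Fp p j k)
      = Complex.exp (2 * Real.pi * Complex.I * (j.val * k.val) / p) / (Real.sqrt p : ℂ) := by
  simp only [Fp, Matrix.of_apply, map_div₀, ← Complex.exp_conj, map_neg, _root_.map_mul,
    map_ofNat, Complex.conj_I, Complex.conj_ofReal, Complex.conj_natCast]
  ring_nf

lemma Fp_mul_conjTranspose (p : ℕ) [NeZero p] : Fp p * (Fp p)ᴴ = 1 := by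
  have hp0 : (0:ℝ) < p := Nat.cast_pos.mpr (Nat.pos_of_ne_zero (NeZero.ne p))
  have hsq : (Real.sqrt p : ℂ) * (Real.sqrt p : ℂ) = (p:ℂ) := by
    rw [← Complex.ofReal_mul, Real.mul_self_sqrt hp0.le]
    exact Complex.ofReal_natCast p
  have hp : (p:ℂ) ≠ 0 := Nat.cast_ne_zero.mpr (NeZero.ne p)
  ext j k
  set d : ℤ := (k.val : ℤ) - j.val with hd
  have key : ∀ m : Fin p, Fp p j m * (starRingEnd ℂ) (Fp p k m)
      = Complex.exp (2*Real.pi*Complex.I*m.val*((d:ℤ):ℂ)/p) / p := by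
    intro m
    rw [conj_Fp]
    show Complex.exp (-(2 * Real.pi * Complex.I * (j.val * m.val)) / p) / (Real.sqrt p : ℂ)
        * _ = _
    rw [div_mul_div_comm, ← Complex.exp_add, hsq]
    congr 1
    rw [← add_div]
    apply congrArg
    rw [div_eq_div_iff hp hp]
    simp only [hd]
    push_cast
    ring
  simp only [Matrix.mul_apply, Matrix.conjTranspose_apply]
  calc ∑ m : Fin p, Fp p j m * (starRingEnd ℂ) (Fp p k m)
      = ∑ m : Fin p, Complex.exp (2*Real.pi*Complex.I*m.val*((d:ℤ):ℂ)/p) / p := by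
        exact Finset.sum_congr rfl fun m _ => key m
    _ = (if (p:ℤ) ∣ d then (p:ℂ) else 0) / p := by
        rw [← Finset.sum_div, sum_exp_eq]
    _ = (1 : Matrix (Fin p) (Fin p) ℂ) j k := by
        by_cases hjk : j = k
        · subst hjk
          simp only [hd, sub_self]
          rw [if_pos (dvd_zero _), Matrix.one_apply_eq, div_self hp]
        · rw [if_neg (not_dvd_sub k j (Ne.symm hjk)), Matrix.one_apply_ne hjk]
          simp

lemma conjTranspose_mul_Fp (p : ℕ) [NeZero p] : (Fp p)ᴴ * Fp p = 1 := by
  have h := Fp_mul_conjTranspose p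
  exact mul_eq_one_comm.mp h









section Struct
variable {n m l p : ℕ} [NeZero p]

lemma circ_xHy (X Y : Fin p → Fin n → ℂ) :
    circ p (xHy X Y) = (bcircV X)ᴴ * bcircV Y := by
  ext j k
  simp only [circ, xHy, Matrix.of_apply, Matrix.mul_apply, Matrix.conjTranspose_apply,
    bcircV, Fintype.sum_prod_type, dotProduct, Pi.star_apply]
  apply Fintype.sum_equiv (Equiv.addRight k)
  intro t
  simp only [Equiv.coe_addRight]
  have e1 : t + k - j = t - (j - k) := by abel
  rw [e1, add_sub_cancel_right]

lemma bcirc_mul_bcircV (A : Fin p → Matrix (Fin n) (Fin m) ℂ) (X : Fin p → Fin m → ℂ) :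
    bcirc A * bcircV X = bcircV (fun t => ∑ s, (A (t - s)).mulVec (X s)) := by
  ext jr k
  obtain ⟨j, r⟩ := jr
  simp only [bcirc, bcircV, Matrix.of_apply, Matrix.mul_apply, Fintype.sum_prod_type,
    Finset.sum_apply, Matrix.mulVec, dotProduct]
  apply Fintype.sum_equiv (Equiv.subRight k)
  intro t
  simp only [Equiv.subRight_apply]
  have e1 : j - k - (t - k) = j - t := by abel
  rw [e1]

lemma bcirc_tmul (A : Fin p → Matrix (Fin n) (Fin m) ℂ) (B : Fin p → Matrix (Fin m) (Fin l) ℂ) :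
    bcirc (tmul A B) = bcirc A * bcirc B := by
  ext jr kc
  obtain ⟨j, r⟩ := jr
  obtain ⟨k, c⟩ := kc
  simp only [bcirc, tmul, Matrix.of_apply, Matrix.mul_apply, Fintype.sum_prod_type,
    Matrix.sum_apply]
  apply Fintype.sum_equiv (Equiv.addRight k)
  intro t
  simp only [Equiv.coe_addRight]
  have e1 : j - (t + k) = j - k - t := by abel
  rw [e1, add_sub_cancel_right]

lemma bcirc_tId : bcirc (tId n p) = 1 := by
  ext jr kc
  obtain ⟨j, r⟩ := jr
  obtain ⟨k, c⟩ := kc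
  simp only [bcirc, tId, Matrix.of_apply]
  by_cases hjk : j = k
  · subst hjk
    simp [Matrix.one_apply, Prod.ext_iff, sub_self]
  · rw [if_neg (sub_ne_zero.mpr hjk), Matrix.one_apply_ne (by simp [Prod.ext_iff, hjk])]
    rfl

lemma circ_e1 : circ p (fun i => if i = (0 : Fin p) then (1:ℂ) else 0) = 1 := by
  ext j k
  simp only [circ, Matrix.of_apply, Matrix.one_apply, sub_eq_zero]

lemma blockDiagMat_mul_blockDiagVec (D : Fin p → Matrix (Fin n) (Fin m) ℂ)
    (y : Fin p → Fin m → ℂ) :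
    blockDiagMat D * blockDiagVec y = blockDiagVec (fun i => (D i).mulVec (y i)) := by
  ext jr k
  obtain ⟨j, r⟩ := jr
  simp only [blockDiagMat, blockDiagVec, Matrix.of_apply, Matrix.mul_apply,
    Fintype.sum_prod_type, Matrix.mulVec, dotProduct]
  by_cases hjk : j = k
  · subst hjk
    rw [Finset.sum_eq_single j]
    · simp
    · intro t _ ht; simp [ht, Ne.symm ht]
    · simp
  · rw [if_neg hjk, Finset.sum_eq_zero]
    intro t _
    by_cases htj : j = t
    · subst htj; simp [hjk]
    · simp [htj, Ne.symm htj]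

lemma blockDiagVecH_mul_blockDiagVec (y z : Fin p → Fin n → ℂ) :
    (blockDiagVec y)ᴴ * blockDiagVec z = Matrix.diagonal (fun i => star (y i) ⬝ᵥ z i) := by
  ext j k
  simp only [blockDiagVec, Matrix.of_apply, Matrix.mul_apply, Matrix.conjTranspose_apply,
    Fintype.sum_prod_type, dotProduct, Pi.star_apply, Matrix.diagonal_apply]
  by_cases hjk : j = k
  · subst hjk
    rw [if_pos rfl, Finset.sum_eq_single j]
    · simp
    · intro t _ ht; simp [ht, Ne.symm ht]
    · simp
  · rw [if_neg hjk, Finset.sum_eq_zero]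
    intro t _
    by_cases htj : t = j
    · subst htj
      rw [Finset.sum_eq_zero]
      intro s _
      simp [hjk]
    · simp [htj, Ne.symm htj]

end Struct

section DFT
variable {n p : ℕ} [NeZero p]

lemma exp_nat_mod (p : ℕ) [NeZero p] (a c : ℕ) :
    Complex.exp (2*Real.pi*Complex.I*(((a % p : ℕ):ℂ) * c)/p)
      = Complex.exp (2*Real.pi*Complex.I*((a:ℂ) * c)/p) := by
  have hp : (p:ℂ) ≠ 0 := Nat.cast_ne_zero.mpr (NeZero.ne p)
  have main : ∀ q b : ℕ, Complex.exp (2*Real.pi*Complex.I*(((p * q + b : ℕ):ℂ) * c)/p)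
      = Complex.exp (2*Real.pi*Complex.I*(((b:ℕ):ℂ) * c)/p) := by
    intro q b
    have harg : (2*(Real.pi:ℂ)*Complex.I*(((p * q + b : ℕ):ℂ) * c)/p)
        = 2*Real.pi*Complex.I*(((b:ℕ):ℂ) * c)/p + ((q * c : ℕ):ℤ) * (2*Real.pi*Complex.I) := by
      field_simp
      push_cast
      ring
    rw [harg, Complex.exp_add, Complex.exp_int_mul_two_pi_mul_I, mul_one]
  conv_rhs => rw [show a = p * (a / p) + a % p from (Nat.div_add_mod a p).symm]
  rw [main]

lemma Fp_sum_key (u i k : Fin p) :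
    ∑ t : Fin p, (starRingEnd ℂ) (Fp p (u + t) i) * Fp p t k
      = Complex.exp (2*Real.pi*Complex.I*((u.val:ℂ) * i.val)/p) * (if i = k then 1 else 0) := by
  have hp0 : (0:ℝ) < p := Nat.cast_pos.mpr (Nat.pos_of_ne_zero (NeZero.ne p))
  have hsq : (Real.sqrt p : ℂ) * (Real.sqrt p : ℂ) = (p:ℂ) := by
    rw [← Complex.ofReal_mul, Real.mul_self_sqrt hp0.le]
    exact Complex.ofReal_natCast p
  have hp : (p:ℂ) ≠ 0 := Nat.cast_ne_zero.mpr (NeZero.ne p)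
  set d : ℤ := (i.val : ℤ) - k.val with hd
  have key : ∀ t : Fin p, (starRingEnd ℂ) (Fp p (u + t) i) * Fp p t k
      = Complex.exp (2*Real.pi*Complex.I*((u.val:ℂ) * i.val)/p)
        * (Complex.exp (2*Real.pi*Complex.I*t.val*((d:ℤ):ℂ)/p) / p) := by
    intro t
    rw [conj_Fp]
    show Complex.exp (2 * Real.pi * Complex.I * ((((u+t : Fin p)).val : ℂ) * i.val) / p) / _
        * (Complex.exp (-(2 * Real.pi * Complex.I * ((t.val:ℂ) * k.val)) / p) / _) = _
    have hval : ((u + t : Fin p)).val = (u.val + t.val) % p := by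
      simp [Fin.val_add]
    rw [hval, exp_nat_mod, div_mul_div_comm, ← Complex.exp_add, hsq]
    rw [show Complex.exp (2*Real.pi*Complex.I*((u.val:ℂ) * i.val)/p)
          * (Complex.exp (2*Real.pi*Complex.I*t.val*((d:ℤ):ℂ)/p) / p)
        = Complex.exp (2*Real.pi*Complex.I*((u.val:ℂ) * i.val)/p
            + 2*Real.pi*Complex.I*t.val*((d:ℤ):ℂ)/p) / p from by rw [Complex.exp_add]; ring]
    congr 1
    apply congrArg
    rw [← add_div, ← add_div, div_eq_div_iff hp hp]
    simp only [hd]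
    push_cast
    ring
  rw [Finset.sum_congr rfl (fun t _ => key t), ← Finset.mul_sum]
  congr 1
  rw [← Finset.sum_div, sum_exp_eq]
  by_cases hik : i = k
  · subst hik
    rw [if_pos (by simp [hd]), if_pos rfl, div_self hp]
  · rw [if_neg (not_dvd_sub i k hik), if_neg hik, zero_div]

noncomputable def yvec (p n : ℕ) (X : Fin p → Fin n → ℂ) : Fin p → Fin n → ℂ :=
  fun i r => ∑ u, Complex.exp (2*Real.pi*Complex.I*((u.val:ℂ) * i.val)/p) * X u r

lemma kron_one_conjT (M : Matrix (Fin p) (Fin p) ℂ) :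
    (M ⊗ₖ (1 : Matrix (Fin n) (Fin n) ℂ))ᴴ = Mᴴ ⊗ₖ (1 : Matrix (Fin n) (Fin n) ℂ) := by
  ext ir js
  obtain ⟨i, r⟩ := ir
  obtain ⟨j, s⟩ := js
  by_cases hrs : r = s
  · subst hrs
    simp [Matrix.conjTranspose_apply, Matrix.kroneckerMap_apply, Matrix.one_apply]
  · simp [Matrix.conjTranspose_apply, Matrix.kroneckerMap_apply, Matrix.one_apply,
      hrs, Ne.symm hrs]

lemma FH_bcircV_F (X : Fin p → Fin n → ℂ) :
    ((Fp p)ᴴ ⊗ₖ (1 : Matrix (Fin n) (Fin n) ℂ)) * bcircV X * Fp p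
      = blockDiagVec (yvec p n X) := by
  ext ir k
  obtain ⟨i, r⟩ := ir
  have step1 : (((Fp p)ᴴ ⊗ₖ (1 : Matrix (Fin n) (Fin n) ℂ)) * bcircV X * Fp p) (i, r) k
      = ∑ t, (∑ j, (starRingEnd ℂ) (Fp p j i) * X (j - t) r) * Fp p t k := by
    simp only [Matrix.mul_apply, Fintype.sum_prod_type, Matrix.kroneckerMap_apply,
      Matrix.conjTranspose_apply, Matrix.one_apply, bcircV, Matrix.of_apply]
    congr 1
    funext t
    congr 1
    congr 1
    funext j
    rw [Finset.sum_eq_single r]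
    · simp
    · intro s _ hs; simp [Ne.symm hs]
    · simp
  rw [step1]
  have step2 : ∀ t : Fin p, (∑ j, (starRingEnd ℂ) (Fp p j i) * X (j - t) r)
      = ∑ u, (starRingEnd ℂ) (Fp p (u + t) i) * X u r := by
    intro t
    apply Fintype.sum_equiv (Equiv.subRight t)
    intro j
    simp only [Equiv.subRight_apply, sub_add_cancel]
  calc ∑ t, (∑ j, (starRingEnd ℂ) (Fp p j i) * X (j - t) r) * Fp p t k
      = ∑ t, ∑ u, ((starRingEnd ℂ) (Fp p (u + t) i) * X u r) * Fp p t k := by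
        refine Finset.sum_congr rfl fun t _ => ?_
        rw [step2 t, Finset.sum_mul]
    _ = ∑ u, X u r * (∑ t, (starRingEnd ℂ) (Fp p (u + t) i) * Fp p t k) := by
        rw [Finset.sum_comm]
        refine Finset.sum_congr rfl fun u _ => ?_
        rw [Finset.mul_sum]
        refine Finset.sum_congr rfl fun t _ => ?_
        ring
    _ = blockDiagVec (yvec p n X) (i, r) k := by
        simp only [Fp_sum_key, blockDiagVec, yvec, Matrix.of_apply]
        by_cases hik : i = k
        · subst hik
          simp [mul_comm]
        · simp [hik]

lemma kron_unitary_right : (Fp p ⊗ₖ (1 : Matrix (Fin n) (Fin n) ℂ)) *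
    ((Fp p)ᴴ ⊗ₖ (1 : Matrix (Fin n) (Fin n) ℂ)) = 1 := by
  rw [← Matrix.mul_kronecker_mul, Fp_mul_conjTranspose, Matrix.one_mul,
    Matrix.one_kronecker_one]

lemma kron_unitary_left : ((Fp p)ᴴ ⊗ₖ (1 : Matrix (Fin n) (Fin n) ℂ)) *
    (Fp p ⊗ₖ (1 : Matrix (Fin n) (Fin n) ℂ)) = 1 := by
  rw [← Matrix.mul_kronecker_mul, conjTranspose_mul_Fp, Matrix.one_mul,
    Matrix.one_kronecker_one]

end DFT


lemma real_kantorovich {n : ℕ} [NeZero n] (μ w : Fin n → ℝ) (a b : ℝ)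
    (ha : 0 < a) (hab : a ≤ b) (hmu : ∀ j, a ≤ μ j ∧ μ j ≤ b)
    (hw : ∀ j, 0 ≤ w j) (hw1 : ∑ j, w j = 1) :
    (∑ j, μ j * w j) * (∑ j, (μ j)⁻¹ * w j) ≤ (a + b)^2 / (4 * a * b) := by
  have hb : 0 < b := lt_of_lt_of_le ha hab
  have hmupos : ∀ j, 0 < μ j := fun j => lt_of_lt_of_le ha (hmu j).1
  set s := ∑ j, μ j * w j with hs
  set q := ∑ j, (μ j)⁻¹ * w j with hq
  have hs0 : 0 ≤ s := Finset.sum_nonneg fun j _ => mul_nonneg (hmupos j).le (hw j)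
  have hkey : a * b * q ≤ (a + b) - s := by
    have hpt : ∀ j, a * b * ((μ j)⁻¹ * w j) ≤ (a + b - μ j) * w j := by
      intro j
      have hμj := hmupos j
      have h1 : a * b * (μ j)⁻¹ ≤ a + b - μ j := by
        rw [← sub_nonneg]
        have h2 : a + b - μ j - a * b * (μ j)⁻¹ = (μ j - a) * (b - μ j) * (μ j)⁻¹ := by
          field_simp
          ring
        rw [h2]
        exact mul_nonneg (mul_nonneg (by linarith [(hmu j).1]) (by linarith [(hmu j).2]))
          (inv_nonneg.mpr hμj.le)
      calc a * b * ((μ j)⁻¹ * w j) = (a * b * (μ j)⁻¹) * w j := by ring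
        _ ≤ (a + b - μ j) * w j := mul_le_mul_of_nonneg_right h1 (hw j)
    calc a * b * q = ∑ j, a * b * ((μ j)⁻¹ * w j) := by rw [hq, Finset.mul_sum]
      _ ≤ ∑ j, (a + b - μ j) * w j := Finset.sum_le_sum fun j _ => hpt j
      _ = (a + b) * (∑ j, w j) - s := by rw [hs, Finset.mul_sum, ← Finset.sum_sub_distrib]; congr 1; ext j; ring
      _ = (a + b) - s := by rw [hw1, mul_one]
  have hq0 : 0 ≤ q := Finset.sum_nonneg fun j _ => mul_nonneg (inv_nonneg.mpr (hmupos j).le) (hw j)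
  rw [le_div_iff₀ (by positivity)]
  nlinarith [mul_le_mul_of_nonneg_left hkey hs0, sq_nonneg (2 * s - (a + b)), mul_pos ha hb]

lemma scalar_kantorovich {n : ℕ} [NeZero n] (B : Matrix (Fin n) (Fin n) ℂ)
    (hH : B.IsHermitian) (hPD : B.PosDef) (y : Fin n → ℂ) (hy : star y ⬝ᵥ y = 1) :
    0 ≤ (1/4 : ℂ) * ((((⨅ j, hH.eigenvalues j : ℝ):ℂ) + ((⨆ j, hH.eigenvalues j : ℝ):ℂ))^2
        * (((⨅ j, hH.eigenvalues j : ℝ):ℂ))⁻¹ * (((⨆ j, hH.eigenvalues j : ℝ):ℂ))⁻¹)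
      - (star y ⬝ᵥ B.mulVec y) * (star y ⬝ᵥ B⁻¹.mulVec y) := by
  classical
  set μ := hH.eigenvalues with hμdef
  have hμpos : ∀ j, 0 < μ j := fun j => hPD.eigenvalues_pos j
  set a : ℝ := ⨅ j, μ j with hadef
  set b : ℝ := ⨆ j, μ j with hbdef
  obtain ⟨j0, hj0⟩ := exists_eq_ciInf_of_finite (f := μ)
  have ha : 0 < a := by rw [hadef, ← hj0]; exact hμpos j0
  have hmu : ∀ j, a ≤ μ j ∧ μ j ≤ b := fun j =>
    ⟨ciInf_le (Finite.bddBelow_range μ) j, le_ciSup (Finite.bddAbove_range μ) j⟩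
  have hab : a ≤ b := le_trans (hmu j0).1 (hmu j0).2
  have hb : 0 < b := lt_of_lt_of_le ha hab
  set U : Matrix (Fin n) (Fin n) ℂ := (hH.eigenvectorUnitary : Matrix (Fin n) (Fin n) ℂ)
    with hUdef
  have hU1 : Uᴴ * U = 1 := by
    rw [← Matrix.star_eq_conjTranspose]
    exact hH.eigenvectorUnitary.2.1
  have hU2 : U * Uᴴ = 1 := mul_eq_one_comm.mp hU1
  have hspec : B = U * Matrix.diagonal (fun j => (μ j : ℂ)) * Uᴴ := hH.spectral_theorem
  set z : Fin n → ℂ := Uᴴ.mulVec y with hzdef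
  set w : Fin n → ℝ := fun j => Complex.normSq (z j) with hwdef
  have hdot : ∀ D : Fin n → ℂ,
      star y ⬝ᵥ (U * Matrix.diagonal D * Uᴴ).mulVec y = ∑ j, D j * (w j : ℂ) := by
    intro D
    rw [← Matrix.mulVec_mulVec, ← Matrix.mulVec_mulVec]
    rw [Matrix.dotProduct_mulVec]
    have hsz : star y ᵥ* U = star z := by
      rw [hzdef, Matrix.star_mulVec, Matrix.conjTranspose_conjTranspose]
    rw [hsz]
    simp only [dotProduct, Matrix.mulVec_diagonal, Pi.star_apply]
    refine Finset.sum_congr rfl fun j _ => ?_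
    have hcz : (starRingEnd ℂ) (z j) * z j = ((Complex.normSq (z j) : ℝ) : ℂ) :=
      (Complex.normSq_eq_conj_mul_self).symm
    calc star (z j) * (D j * z j) = D j * ((starRingEnd ℂ) (z j) * z j) := by
          rw [RCLike.star_def]; ring
      _ = D j * ((w j : ℝ) : ℂ) := by rw [hcz]
  have hs_eq : star y ⬝ᵥ B.mulVec y = ∑ j, ((μ j : ℂ)) * ((w j : ℝ) : ℂ) := by
    conv_lhs => rw [hspec]
    exact hdot _
  have hBinv' : B⁻¹ = U * Matrix.diagonal (fun j => ((μ j : ℂ))⁻¹) * Uᴴ := by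
    apply Matrix.inv_eq_right_inv
    rw [hspec]
    have hassoc : U * Matrix.diagonal (fun j => (μ j : ℂ)) * Uᴴ
        * (U * Matrix.diagonal (fun j => ((μ j : ℂ))⁻¹) * Uᴴ)
        = U * (Matrix.diagonal (fun j => (μ j : ℂ)) * (Uᴴ * U)
          * Matrix.diagonal (fun j => ((μ j : ℂ))⁻¹)) * Uᴴ := by
      simp only [Matrix.mul_assoc]
    rw [hassoc, hU1, Matrix.mul_one, Matrix.diagonal_mul_diagonal]
    have : (fun j => (μ j : ℂ) * ((μ j : ℂ))⁻¹) = fun _ => (1:ℂ) := by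
      funext j
      exact mul_inv_cancel₀ (by exact_mod_cast (hμpos j).ne')
    rw [this, Matrix.diagonal_one, Matrix.mul_one, hU2]
  have hq_eq : star y ⬝ᵥ B⁻¹.mulVec y = ∑ j, ((μ j : ℂ))⁻¹ * ((w j : ℝ) : ℂ) := by
    rw [hBinv']
    exact hdot _
  have hw1 : ∑ j, w j = 1 := by
    have h1 : U * Matrix.diagonal (fun _ : Fin n => (1:ℂ)) * Uᴴ = 1 := by
      rw [Matrix.diagonal_one, Matrix.mul_one, hU2]
    have h2 := hdot (fun _ => 1)
    rw [h1, Matrix.one_mulVec, hy] at h2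
    simp only [one_mul] at h2
    rw [← Complex.ofReal_sum] at h2
    exact_mod_cast h2.symm
  have hmain := real_kantorovich μ w a b ha hab hmu
    (fun j => Complex.normSq_nonneg _) hw1
  rw [hs_eq, hq_eq]
  have e1 : (∑ j, ((μ j:ℂ)) * ((w j : ℝ):ℂ)) = ((∑ j, μ j * w j : ℝ) : ℂ) := by
    push_cast; rfl
  have e2 : (∑ j, ((μ j:ℂ))⁻¹ * ((w j : ℝ):ℂ)) = ((∑ j, (μ j)⁻¹ * w j : ℝ) : ℂ) := by
    push_cast; rfl
  rw [e1, e2]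
  have e3 : (1/4:ℂ) * (((a:ℂ) + (b:ℂ))^2 * ((a:ℂ))⁻¹ * ((b:ℂ))⁻¹)
      - ((∑ j, μ j * w j : ℝ) : ℂ) * ((∑ j, (μ j)⁻¹ * w j : ℝ) : ℂ)
      = (((a+b)^2/(4*a*b) - (∑ j, μ j * w j) * (∑ j, (μ j)⁻¹ * w j) : ℝ) : ℂ) := by
    push_cast
    have ha0 : (a:ℂ) ≠ 0 := by exact_mod_cast ha.ne'
    have hb0 : (b:ℂ) ≠ 0 := by exact_mod_cast hb.ne'
    field_simp
  rw [e3]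
  rw [Complex.zero_le_real]
  linarith [hmain]


section Helpers
variable {n p : ℕ} [NeZero p] [NeZero n]

lemma posdef_conj_unitary {k : Type*} [Fintype k] [DecidableEq k]
    (M C : Matrix k k ℂ) (hM : M.PosDef) (hC : C * Cᴴ = 1) : (Cᴴ * M * C).PosDef := by
  refine Matrix.PosDef.of_dotProduct_mulVec_pos (Matrix.isHermitian_conjTranspose_mul_mul C hM.1) fun x hx => ?_
  have hC' : Cᴴ * C = 1 := mul_eq_one_comm.mp hC
  have hCx : C *ᵥ x ≠ 0 := by
    intro h0
    apply hx
    have : (Cᴴ * C) *ᵥ x = Cᴴ *ᵥ (C *ᵥ x) := by rw [Matrix.mulVec_mulVec]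
    rw [hC', Matrix.one_mulVec] at this
    rw [this, h0, Matrix.mulVec_zero]
  have := hM.dotProduct_mulVec_pos hCx
  simpa only [Matrix.star_mulVec, Matrix.dotProduct_mulVec, Matrix.vecMul_vecMul] using this

lemma blockDiag_posdef (At : Fin p → Matrix (Fin n) (Fin n) ℂ)
    (h : (blockDiagMat At).PosDef) (i : Fin p) (hH : (At i).IsHermitian) : (At i).PosDef := by
  refine Matrix.PosDef.of_dotProduct_mulVec_pos hH fun v hv => ?_
  set vv : Fin p × Fin n → ℂ := fun tr => if tr.1 = i then v tr.2 else 0 with hvvdef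
  have hvv : vv ≠ 0 := by
    obtain ⟨r, hr⟩ := Function.ne_iff.mp hv
    intro h0
    apply hr
    have := congrFun h0 (i, r)
    simpa [hvvdef] using this
  have hquad : star vv ⬝ᵥ (blockDiagMat At) *ᵥ vv = star v ⬝ᵥ (At i) *ᵥ v := by
    simp only [dotProduct, Matrix.mulVec, blockDiagMat, Matrix.of_apply,
      Fintype.sum_prod_type, Pi.star_apply, hvvdef, dotProduct]
    rw [Finset.sum_eq_single i]
    · refine Finset.sum_congr rfl fun r _ => ?_
      simp only [if_pos rfl]
      congr 1
      rw [Finset.sum_eq_single i]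
      · simp
      · intro t _ ht; simp [ht]
      · simp
    · intro t _ ht
      rw [Finset.sum_eq_zero]
      intro r _
      simp [ht]
    · simp
  have := h.dotProduct_mulVec_pos hvv
  rwa [hquad] at this

lemma blockDiagMat_mul_blockDiagMat (D E : Fin p → Matrix (Fin n) (Fin n) ℂ) :
    blockDiagMat D * blockDiagMat E = blockDiagMat (fun i => D i * E i) := by
  ext jr kc
  obtain ⟨j, r⟩ := jr
  obtain ⟨k, c⟩ := kc
  simp only [blockDiagMat, Matrix.of_apply, Matrix.mul_apply, Fintype.sum_prod_type]
  by_cases hjk : j = k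
  · subst hjk
    rw [Finset.sum_eq_single j]
    · simp [Matrix.mul_apply]
    · intro t _ ht; simp [ht, Ne.symm ht]
    · simp
  · rw [if_neg hjk, Finset.sum_eq_zero]
    intro t _
    by_cases htj : j = t
    · subst htj; simp [hjk]
    · simp [htj]

lemma blockDiagMat_one : blockDiagMat (fun _ : Fin p => (1 : Matrix (Fin n) (Fin n) ℂ)) = 1 := by
  ext jr kc
  obtain ⟨j, r⟩ := jr
  obtain ⟨k, c⟩ := kc
  simp only [blockDiagMat, Matrix.of_apply, Matrix.one_apply, Prod.mk.injEq]
  by_cases hjk : j = k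
  · subst hjk
    by_cases hrc : r = c <;> simp [hrc]
  · simp [hjk]

end Helpers


/-- Kantorovich inequality for tubular tensors:
`(𝒳ᴴ*𝒜*𝒳)*(𝒳ᴴ*𝒜⁻¹*𝒳) ⪯ (1/4)([λ_m]+[λ_M])² * [λ_m]⁻¹ * [λ_M]⁻¹`
whenever `𝒜` is Hermitian positive definite and `𝒳ᴴ*𝒳 = [e₁]`. -/
theorem tubular_kantorovich (n p : ℕ) [NeZero n] [NeZero p]
    (A At Binv : Fin p → Matrix (Fin n) (Fin n) ℂ)
    (hPD : (bcirc A).PosDef)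
    (hBinv : tmul A Binv = tId n p ∧ tmul Binv A = tId n p)
    (hbd : bcirc A = (Fp p ⊗ₖ (1 : Matrix (Fin n) (Fin n) ℂ)) * blockDiagMat At *
        ((Fp p)ᴴ ⊗ₖ (1 : Matrix (Fin n) (Fin n) ℂ)))
    (hAt : ∀ i, (At i).IsHermitian)
    (lm lM : Fin p → ℂ)
    (hlm : (Fp p)ᴴ * circ p lm * Fp p =
      Matrix.diagonal fun i => ((⨅ j, (hAt i).eigenvalues j : ℝ) : ℂ))
    (hlM : (Fp p)ᴴ * circ p lM * Fp p =
      Matrix.diagonal fun i => ((⨆ j, (hAt i).eigenvalues j : ℝ) : ℂ))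
    (X : Fin p → Fin n → ℂ)
    (hX : xHx X = fun i => if i = 0 then 1 else 0) :
    ((1 / 4 : ℂ) • ((circ p lm + circ p lM) ^ 2 * (circ p lm)⁻¹ * (circ p lM)⁻¹)
        - circ p (xHy X fun t => ∑ s, (A (t - s)).mulVec (X s)) *
          circ p (xHy X fun t => ∑ s, (Binv (t - s)).mulVec (X s))).PosSemidef := by
  classical
  have hFF : Fp p * (Fp p)ᴴ = 1 := Fp_mul_conjTranspose p
  have hFHF : (Fp p)ᴴ * Fp p = 1 := conjTranspose_mul_Fp p
  have hc1 : ∀ W : Matrix (Fin p) (Fin p) ℂ, (Fp p)ᴴ * (Fp p * W) = W := fun W => by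
    rw [← Matrix.mul_assoc, hFHF, Matrix.one_mul]
  have hc2 : ∀ W : Matrix (Fin p) (Fin p) ℂ, Fp p * ((Fp p)ᴴ * W) = W := fun W => by
    rw [← Matrix.mul_assoc, hFF, Matrix.one_mul]
  have hUk1 : (Fp p ⊗ₖ (1 : Matrix (Fin n) (Fin n) ℂ)) *
      ((Fp p)ᴴ ⊗ₖ (1 : Matrix (Fin n) (Fin n) ℂ)) = 1 := kron_unitary_right
  have hUk2 : ((Fp p)ᴴ ⊗ₖ (1 : Matrix (Fin n) (Fin n) ℂ)) *
      (Fp p ⊗ₖ (1 : Matrix (Fin n) (Fin n) ℂ)) = 1 := kron_unitary_left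
  -- P and Q as conjugated forms
  have hVHV : (bcircV X)ᴴ * bcircV X = 1 := by
    rw [← circ_xHy, show xHy X X = fun i => if i = (0 : Fin p) then (1:ℂ) else 0 from hX,
      circ_e1]
  have hP : circ p (xHy X fun t => ∑ s, (A (t - s)).mulVec (X s))
      = (bcircV X)ᴴ * (bcirc A * bcircV X) := by
    rw [circ_xHy, ← bcirc_mul_bcircV]
  have hMBinv : bcirc A * bcirc Binv = 1 := by
    rw [← bcirc_tmul, hBinv.1, bcirc_tId]
  have hMinv : bcirc Binv = (bcirc A)⁻¹ := (Matrix.inv_eq_right_inv hMBinv).symm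
  have hQ : circ p (xHy X fun t => ∑ s, (Binv (t - s)).mulVec (X s))
      = (bcircV X)ᴴ * ((bcirc A)⁻¹ * bcircV X) := by
    rw [circ_xHy, ← bcirc_mul_bcircV, hMinv]
  -- positive definiteness of the blocks
  have hBD : blockDiagMat At = ((Fp p)ᴴ ⊗ₖ (1 : Matrix (Fin n) (Fin n) ℂ)) * bcirc A *
      (Fp p ⊗ₖ (1 : Matrix (Fin n) (Fin n) ℂ)) := by
    rw [hbd]
    rw [show ((Fp p)ᴴ ⊗ₖ (1 : Matrix (Fin n) (Fin n) ℂ)) *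
        ((Fp p ⊗ₖ (1 : Matrix (Fin n) (Fin n) ℂ)) * blockDiagMat At *
          ((Fp p)ᴴ ⊗ₖ (1 : Matrix (Fin n) (Fin n) ℂ))) *
        (Fp p ⊗ₖ (1 : Matrix (Fin n) (Fin n) ℂ))
      = (((Fp p)ᴴ ⊗ₖ (1 : Matrix (Fin n) (Fin n) ℂ)) *
          (Fp p ⊗ₖ (1 : Matrix (Fin n) (Fin n) ℂ))) * blockDiagMat At *
        (((Fp p)ᴴ ⊗ₖ (1 : Matrix (Fin n) (Fin n) ℂ)) *
          (Fp p ⊗ₖ (1 : Matrix (Fin n) (Fin n) ℂ))) from by simp only [Matrix.mul_assoc]]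
    rw [hUk2, Matrix.one_mul, Matrix.mul_one]
  have hBDpd : (blockDiagMat At).PosDef := by
    rw [hBD, ← kron_one_conjT]
    exact posdef_conj_unitary (bcirc A) (Fp p ⊗ₖ (1 : Matrix (Fin n) (Fin n) ℂ)) hPD
      (by rw [kron_one_conjT]; exact hUk1)
  have hAtPD : ∀ i, (At i).PosDef := fun i => blockDiag_posdef At hBDpd i (hAt i)
  have hai : ∀ i, 0 < ⨅ j, (hAt i).eigenvalues j := by
    intro i
    obtain ⟨j0, hj0⟩ := exists_eq_ciInf_of_finite (f := (hAt i).eigenvalues)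
    rw [← hj0]
    exact (hAtPD i).eigenvalues_pos j0
  have hbi : ∀ i, 0 < ⨆ j, (hAt i).eigenvalues j := by
    intro i
    obtain ⟨j0, hj0⟩ := exists_eq_ciInf_of_finite (f := (hAt i).eigenvalues)
    calc (0:ℝ) < (hAt i).eigenvalues j0 := (hAtPD i).eigenvalues_pos j0
      _ ≤ ⨆ j, (hAt i).eigenvalues j := le_ciSup (Finite.bddAbove_range _) j0
  have hconj : ∀ W : Matrix (Fin p) (Fin p) ℂ, Fp p * ((Fp p)ᴴ * W * Fp p) * (Fp p)ᴴ = W := by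
    intro W
    simp only [Matrix.mul_assoc]
    rw [hFF, Matrix.mul_one, hc2]
  have hLm : circ p lm
      = Fp p * Matrix.diagonal (fun i => ((⨅ j, (hAt i).eigenvalues j : ℝ) : ℂ)) * (Fp p)ᴴ := by
    rw [← hlm, hconj]
  have hLM : circ p lM
      = Fp p * Matrix.diagonal (fun i => ((⨆ j, (hAt i).eigenvalues j : ℝ) : ℂ)) * (Fp p)ᴴ := by
    rw [← hlM, hconj]
  have hcollapse : ∀ D1 D2 : Matrix (Fin p) (Fin p) ℂ,
      (Fp p * D1 * (Fp p)ᴴ) * (Fp p * D2 * (Fp p)ᴴ) = Fp p * (D1 * D2) * (Fp p)ᴴ := by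
    intro D1 D2
    simp only [Matrix.mul_assoc, hc1]
  have hLmInv : (circ p lm)⁻¹
      = Fp p * Matrix.diagonal (fun i => ((⨅ j, (hAt i).eigenvalues j : ℝ) : ℂ)⁻¹) * (Fp p)ᴴ := by
    apply Matrix.inv_eq_right_inv
    rw [hLm, hcollapse, Matrix.diagonal_mul_diagonal]
    rw [show (fun i => ((⨅ j, (hAt i).eigenvalues j : ℝ) : ℂ)
        * ((⨅ j, (hAt i).eigenvalues j : ℝ) : ℂ)⁻¹) = fun _ => (1:ℂ) from
      funext fun i => mul_inv_cancel₀ (by exact_mod_cast (hai i).ne')]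
    rw [Matrix.diagonal_one, Matrix.mul_one, hFF]
  have hLMInv : (circ p lM)⁻¹
      = Fp p * Matrix.diagonal (fun i => ((⨆ j, (hAt i).eigenvalues j : ℝ) : ℂ)⁻¹) * (Fp p)ᴴ := by
    apply Matrix.inv_eq_right_inv
    rw [hLM, hcollapse, Matrix.diagonal_mul_diagonal]
    rw [show (fun i => ((⨆ j, (hAt i).eigenvalues j : ℝ) : ℂ)
        * ((⨆ j, (hAt i).eigenvalues j : ℝ) : ℂ)⁻¹) = fun _ => (1:ℂ) from
      funext fun i => mul_inv_cancel₀ (by exact_mod_cast (hbi i).ne')]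
    rw [Matrix.diagonal_one, Matrix.mul_one, hFF]
  -- the transformed eigentensor
  have hZ : ((Fp p)ᴴ ⊗ₖ (1 : Matrix (Fin n) (Fin n) ℂ)) * bcircV X * Fp p
      = blockDiagVec (yvec p n X) := FH_bcircV_F X
  have hZH : (((Fp p)ᴴ ⊗ₖ (1 : Matrix (Fin n) (Fin n) ℂ)) * bcircV X * Fp p)ᴴ
      = (Fp p)ᴴ * ((bcircV X)ᴴ * (Fp p ⊗ₖ (1 : Matrix (Fin n) (Fin n) ℂ))) := by
    rw [Matrix.conjTranspose_mul, Matrix.conjTranspose_mul, kron_one_conjT,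
      Matrix.conjTranspose_conjTranspose]
  have hunit_y : ∀ i, star (yvec p n X i) ⬝ᵥ yvec p n X i = 1 := by
    have h1 : (blockDiagVec (yvec p n X))ᴴ * blockDiagVec (yvec p n X) = 1 := by
      rw [← hZ, hZH]
      have e1 : (Fp p ⊗ₖ (1 : Matrix (Fin n) (Fin n) ℂ)) *
          (((Fp p)ᴴ ⊗ₖ (1 : Matrix (Fin n) (Fin n) ℂ)) * (bcircV X * Fp p))
          = bcircV X * Fp p := by
        rw [← Matrix.mul_assoc, hUk1, Matrix.one_mul]
      simp only [Matrix.mul_assoc]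
      rw [e1, ← Matrix.mul_assoc (bcircV X)ᴴ (bcircV X) (Fp p), hVHV, Matrix.one_mul, hFHF]
    have h2 : Matrix.diagonal (fun i => star (yvec p n X i) ⬝ᵥ yvec p n X i)
        = (1 : Matrix (Fin p) (Fin p) ℂ) := by
      rw [← blockDiagVecH_mul_blockDiagVec, h1]
    intro i
    have := congrFun (congrFun h2 i) i
    simpa using this
  -- diagonalization of P and Q
  have hMinv2 : (bcirc A)⁻¹ = (Fp p ⊗ₖ (1 : Matrix (Fin n) (Fin n) ℂ)) *
      blockDiagMat (fun i => (At i)⁻¹) * ((Fp p)ᴴ ⊗ₖ (1 : Matrix (Fin n) (Fin n) ℂ)) := by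
    apply Matrix.inv_eq_right_inv
    rw [hbd]
    have hBDinv : blockDiagMat At * blockDiagMat (fun i => (At i)⁻¹) = 1 := by
      rw [blockDiagMat_mul_blockDiagMat]
      rw [show (fun i => At i * (At i)⁻¹) = fun _ : Fin p => (1 : Matrix (Fin n) (Fin n) ℂ) from
        funext fun i => Matrix.mul_nonsing_inv _ ((hAtPD i).det_pos.ne'.isUnit)]
      exact blockDiagMat_one
    calc (Fp p ⊗ₖ (1 : Matrix (Fin n) (Fin n) ℂ)) * blockDiagMat At *
          ((Fp p)ᴴ ⊗ₖ (1 : Matrix (Fin n) (Fin n) ℂ)) *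
        ((Fp p ⊗ₖ (1 : Matrix (Fin n) (Fin n) ℂ)) * blockDiagMat (fun i => (At i)⁻¹) *
          ((Fp p)ᴴ ⊗ₖ (1 : Matrix (Fin n) (Fin n) ℂ)))
        = (Fp p ⊗ₖ (1 : Matrix (Fin n) (Fin n) ℂ)) * (blockDiagMat At *
            ((((Fp p)ᴴ ⊗ₖ (1 : Matrix (Fin n) (Fin n) ℂ)) *
              (Fp p ⊗ₖ (1 : Matrix (Fin n) (Fin n) ℂ))) * (blockDiagMat (fun i => (At i)⁻¹) *
            ((Fp p)ᴴ ⊗ₖ (1 : Matrix (Fin n) (Fin n) ℂ))))) := by simp only [Matrix.mul_assoc]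
      _ = (Fp p ⊗ₖ (1 : Matrix (Fin n) (Fin n) ℂ)) *
            ((blockDiagMat At * blockDiagMat (fun i => (At i)⁻¹)) *
            ((Fp p)ᴴ ⊗ₖ (1 : Matrix (Fin n) (Fin n) ℂ))) := by
          rw [hUk2, Matrix.one_mul, Matrix.mul_assoc]
      _ = 1 := by rw [hBDinv, Matrix.one_mul, hUk1]
  have hPdiagKey : (Fp p)ᴴ * ((bcircV X)ᴴ * (bcirc A * bcircV X)) * Fp p
      = Matrix.diagonal (fun i => star (yvec p n X i) ⬝ᵥ (At i).mulVec (yvec p n X i)) := by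
    calc (Fp p)ᴴ * ((bcircV X)ᴴ * (bcirc A * bcircV X)) * Fp p
        = (((Fp p)ᴴ ⊗ₖ (1 : Matrix (Fin n) (Fin n) ℂ)) * bcircV X * Fp p)ᴴ * blockDiagMat At *
          (((Fp p)ᴴ ⊗ₖ (1 : Matrix (Fin n) (Fin n) ℂ)) * bcircV X * Fp p) := by
          rw [hbd, hZH]
          simp only [Matrix.mul_assoc]
      _ = (blockDiagVec (yvec p n X))ᴴ * blockDiagMat At * blockDiagVec (yvec p n X) := by
          rw [hZ]
      _ = Matrix.diagonal (fun i => star (yvec p n X i) ⬝ᵥ (At i).mulVec (yvec p n X i)) := by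
          rw [Matrix.mul_assoc, blockDiagMat_mul_blockDiagVec, blockDiagVecH_mul_blockDiagVec]
  have hQdiagKey : (Fp p)ᴴ * ((bcircV X)ᴴ * ((bcirc A)⁻¹ * bcircV X)) * Fp p
      = Matrix.diagonal (fun i => star (yvec p n X i) ⬝ᵥ (At i)⁻¹.mulVec (yvec p n X i)) := by
    calc (Fp p)ᴴ * ((bcircV X)ᴴ * ((bcirc A)⁻¹ * bcircV X)) * Fp p
        = (((Fp p)ᴴ ⊗ₖ (1 : Matrix (Fin n) (Fin n) ℂ)) * bcircV X * Fp p)ᴴ *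
            blockDiagMat (fun i => (At i)⁻¹) *
          (((Fp p)ᴴ ⊗ₖ (1 : Matrix (Fin n) (Fin n) ℂ)) * bcircV X * Fp p) := by
          rw [hMinv2, hZH]
          simp only [Matrix.mul_assoc]
      _ = (blockDiagVec (yvec p n X))ᴴ * blockDiagMat (fun i => (At i)⁻¹) *
            blockDiagVec (yvec p n X) := by rw [hZ]
      _ = Matrix.diagonal (fun i => star (yvec p n X i) ⬝ᵥ (At i)⁻¹.mulVec (yvec p n X i)) := by
          rw [Matrix.mul_assoc, blockDiagMat_mul_blockDiagVec, blockDiagVecH_mul_blockDiagVec]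
  have hPff : circ p (xHy X fun t => ∑ s, (A (t - s)).mulVec (X s))
      = Fp p * Matrix.diagonal (fun i => star (yvec p n X i) ⬝ᵥ (At i).mulVec (yvec p n X i))
        * (Fp p)ᴴ := by
    rw [hP, ← hPdiagKey, hconj]
  have hQff : circ p (xHy X fun t => ∑ s, (Binv (t - s)).mulVec (X s))
      = Fp p * Matrix.diagonal (fun i => star (yvec p n X i) ⬝ᵥ (At i)⁻¹.mulVec (yvec p n X i))
        * (Fp p)ᴴ := by
    rw [hQ, ← hQdiagKey, hconj]
  -- assemble
  rw [hLmInv, hLMInv, hPff, hQff, hLm, hLM]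
  rw [show Fp p * Matrix.diagonal (fun i => ((⨅ j, (hAt i).eigenvalues j : ℝ) : ℂ)) * (Fp p)ᴴ
      + Fp p * Matrix.diagonal (fun i => ((⨆ j, (hAt i).eigenvalues j : ℝ) : ℂ)) * (Fp p)ᴴ
      = Fp p * (Matrix.diagonal (fun i => ((⨅ j, (hAt i).eigenvalues j : ℝ) : ℂ))
        + Matrix.diagonal (fun i => ((⨆ j, (hAt i).eigenvalues j : ℝ) : ℂ))) * (Fp p)ᴴ from by
    rw [Matrix.mul_add, Matrix.add_mul]]
  rw [pow_two, hcollapse, hcollapse, hcollapse, hcollapse]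
  rw [show (1/4 : ℂ) • (Fp p * ((Matrix.diagonal (fun i => ((⨅ j, (hAt i).eigenvalues j : ℝ) : ℂ))
        + Matrix.diagonal (fun i => ((⨆ j, (hAt i).eigenvalues j : ℝ) : ℂ)))
      * (Matrix.diagonal (fun i => ((⨅ j, (hAt i).eigenvalues j : ℝ) : ℂ))
        + Matrix.diagonal (fun i => ((⨆ j, (hAt i).eigenvalues j : ℝ) : ℂ)))
      * Matrix.diagonal (fun i => ((⨅ j, (hAt i).eigenvalues j : ℝ) : ℂ)⁻¹)
      * Matrix.diagonal (fun i => ((⨆ j, (hAt i).eigenvalues j : ℝ) : ℂ)⁻¹)) * (Fp p)ᴴ)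
      = Fp p * ((1/4 : ℂ) • ((Matrix.diagonal (fun i => ((⨅ j, (hAt i).eigenvalues j : ℝ) : ℂ))
        + Matrix.diagonal (fun i => ((⨆ j, (hAt i).eigenvalues j : ℝ) : ℂ)))
      * (Matrix.diagonal (fun i => ((⨅ j, (hAt i).eigenvalues j : ℝ) : ℂ))
        + Matrix.diagonal (fun i => ((⨆ j, (hAt i).eigenvalues j : ℝ) : ℂ)))
      * Matrix.diagonal (fun i => ((⨅ j, (hAt i).eigenvalues j : ℝ) : ℂ)⁻¹)
      * Matrix.diagonal (fun i => ((⨆ j, (hAt i).eigenvalues j : ℝ) : ℂ)⁻¹))) * (Fp p)ᴴ from by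
    rw [mul_smul_comm, smul_mul_assoc]]
  rw [show ∀ D1 D2 : Matrix (Fin p) (Fin p) ℂ,
      Fp p * D1 * (Fp p)ᴴ - Fp p * D2 * (Fp p)ᴴ = Fp p * (D1 - D2) * (Fp p)ᴴ from
    fun D1 D2 => by rw [Matrix.mul_sub, Matrix.sub_mul]]
  set c : Fin p → ℂ := fun i =>
    (1/4 : ℂ) * ((((⨅ j, (hAt i).eigenvalues j : ℝ):ℂ) + ((⨆ j, (hAt i).eigenvalues j : ℝ):ℂ))^2
        * (((⨅ j, (hAt i).eigenvalues j : ℝ):ℂ))⁻¹ * (((⨆ j, (hAt i).eigenvalues j : ℝ):ℂ))⁻¹)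
      - (star (yvec p n X i) ⬝ᵥ (At i).mulVec (yvec p n X i))
        * (star (yvec p n X i) ⬝ᵥ (At i)⁻¹.mulVec (yvec p n X i)) with hcdef
  have hDbig : (1/4 : ℂ) • ((Matrix.diagonal (fun i => ((⨅ j, (hAt i).eigenvalues j : ℝ) : ℂ))
        + Matrix.diagonal (fun i => ((⨆ j, (hAt i).eigenvalues j : ℝ) : ℂ)))
      * (Matrix.diagonal (fun i => ((⨅ j, (hAt i).eigenvalues j : ℝ) : ℂ))
        + Matrix.diagonal (fun i => ((⨆ j, (hAt i).eigenvalues j : ℝ) : ℂ)))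
      * Matrix.diagonal (fun i => ((⨅ j, (hAt i).eigenvalues j : ℝ) : ℂ)⁻¹)
      * Matrix.diagonal (fun i => ((⨆ j, (hAt i).eigenvalues j : ℝ) : ℂ)⁻¹))
      - Matrix.diagonal (fun i => star (yvec p n X i) ⬝ᵥ (At i).mulVec (yvec p n X i))
        * Matrix.diagonal (fun i => star (yvec p n X i) ⬝ᵥ (At i)⁻¹.mulVec (yvec p n X i))
      = Matrix.diagonal c := by
    rw [Matrix.diagonal_add, Matrix.diagonal_mul_diagonal, Matrix.diagonal_mul_diagonal,
      Matrix.diagonal_mul_diagonal, Matrix.diagonal_mul_diagonal, ← Matrix.diagonal_smul,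
      Matrix.diagonal_sub]
    apply congrArg Matrix.diagonal
    funext i
    simp only [hcdef, Pi.smul_apply, Pi.sub_apply, Pi.add_apply, smul_eq_mul]
    ring
  rw [hDbig]
  have hcnn : ∀ i, 0 ≤ c i := by
    intro i
    rw [hcdef]
    exact scalar_kantorovich (At i) (hAt i) (hAtPD i) (yvec p n X i) (hunit_y i)
  exact (Matrix.posSemidef_diagonal_iff.mpr hcnn).mul_mul_conjTranspose_same (Fp p)
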